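/- There exists an absolute constant C > 0 such that the following holds. Let q ≥ 2 be an integer, χ a primitive Dirichlet character mod q, and s > 0 a real number. Then for every real X > 0, L(s,χ) = ∑_{n ≤ X} χ(n) n^{−s} + E₁(s,X,χ), where E₁(s,X,χ) = X^{−s} ∑_{a=1}^q χ(a) ψ((X−a)/q) − s q^{−s} ∑_{a=1}^q χ(a) ∫_{X/q}^∞ ψ(u − a/q) u^{−s−1} du, and moreover |E₁(s,X,χ)| ≤ C q X^{−s}. -/

import Mathlib

open Finset Complex

/-- The sawtooth function `ψ(u) = u − ⌊u⌋ − 1/2`. -/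
noncomputable def sawtooth (u : ℝ) : ℝ := u - ⌊u⌋ - 1 / 2

namespace AFEAux

open MeasureTheory Filter Topology

lemma saw_fract (u : ℝ) : sawtooth u = Int.fract u - 1 / 2 := by
  rw [sawtooth, Int.self_sub_floor]

lemma abs_saw_le (u : ℝ) : |sawtooth u| ≤ 1 / 2 := by
  rw [saw_fract, abs_le]
  have h1 := Int.fract_nonneg u
  have h2 := Int.fract_lt_one u
  constructor <;> nlinarith

lemma norm_saw_le (u : ℝ) : ‖sawtooth u‖ ≤ 1 / 2 := abs_saw_le u

lemma meas_saw : Measurable sawtooth := by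
  have : sawtooth = fun u => Int.fract u - 1 / 2 := funext saw_fract
  rw [this]; exact measurable_fract.sub measurable_const

/-- floor of `x / q` equals `⌊x⌋ / q` (integer division). -/
lemma floor_div_nat' (x : ℝ) {q : ℕ} (hq : 0 < q) : ⌊x / (q : ℝ)⌋ = ⌊x⌋ / (q : ℤ) := by
  have hq' : (0:ℝ) < q := by exact_mod_cast hq
  have hqz : (0:ℤ) < q := by exact_mod_cast hq
  rw [Int.floor_eq_iff]
  constructor
  · rw [le_div_iff₀ hq']
    have h1 : (⌊x⌋ / (q:ℤ)) * q ≤ ⌊x⌋ := Int.ediv_mul_le _ (by exact_mod_cast hq.ne')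
    calc ((⌊x⌋/(q:ℤ) : ℤ):ℝ) * q = ((⌊x⌋/(q:ℤ)*q : ℤ):ℝ) := by push_cast; ring
    _ ≤ (⌊x⌋:ℝ) := by exact_mod_cast h1
    _ ≤ x := Int.floor_le x
  · rw [div_lt_iff₀ hq']
    have h2 : ⌊x⌋ < (⌊x⌋/(q:ℤ) + 1) * q := Int.lt_ediv_add_one_mul_self _ hqz
    calc x < (⌊x⌋:ℝ) + 1 := Int.lt_floor_add_one x
    _ ≤ (((⌊x⌋/(q:ℤ)+1)*q : ℤ) : ℝ) := by exact_mod_cast h2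
    _ = _ := by push_cast; ring

lemma floor_div_floor (x : ℝ) {q : ℕ} (hq : 0 < q) : ⌊(⌊x⌋ : ℝ) / (q : ℝ)⌋ = ⌊x / (q:ℝ)⌋ := by
  rw [floor_div_nat' x hq, floor_div_nat' _ hq, Int.floor_intCast]

lemma sum_shift_zmod (q : ℕ) [NeZero q] (g : ZMod q → ℂ) (c : ℕ) :
    ∑ j ∈ range q, g ((c + j : ℕ) : ZMod q) = ∑ x : ZMod q, g x := by
  refine Finset.sum_nbij' (i := fun j => ((c + j : ℕ) : ZMod q))
    (j := fun x => ((x - c) : ZMod q).val) (fun a _ => mem_univ _)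
    (fun x _ => mem_range.mpr (ZMod.val_lt _)) ?_ ?_ (fun a _ => rfl)
  · intro j hj
    push_cast
    simp only [add_sub_cancel_left]
    exact ZMod.val_natCast_of_lt (mem_range.mp hj)
  · intro x _
    push_cast
    simp [ZMod.natCast_val, ZMod.cast_id]

lemma icc_eq_ioc (M : ℕ) : Finset.Icc 1 M = Finset.Ioc 0 M := Finset.Icc_add_one_left_eq_Ioc 0 M

lemma sum_icc_zmod (q : ℕ) [NeZero q] (g : ZMod q → ℂ) :
    ∑ a ∈ Finset.Icc 1 q, g (a : ZMod q) = ∑ x : ZMod q, g x := by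
  rw [icc_eq_ioc, ← Finset.Ico_add_one_add_one_eq_Ioc, Finset.sum_Ico_eq_sum_range]
  simp only [Nat.add_sub_add_right]
  rw [show q - 0 = q from rfl]
  exact sum_shift_zmod q g 1

lemma count_sum (q : ℕ) [NeZero q] (g : ZMod q → ℂ) (N : ℕ) :
    ∑ n ∈ Finset.Icc 1 N, g (n : ZMod q) =
      ∑ a ∈ Finset.Icc 1 q, g (a : ZMod q) * (((⌊((N:ℝ) - (a:ℝ)) / (q:ℝ)⌋ : ℤ) : ℂ) + 1) := by
  have hq : 0 < q := Nat.pos_of_ne_zero (NeZero.ne q)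
  have hq' : (0:ℝ) < q := by exact_mod_cast hq
  induction N using Nat.strong_induction_on with
  | _ N ih =>
    rcases lt_or_ge N q with hN | hN
    · have key : ∀ a ∈ Finset.Icc 1 q,
          g (a:ZMod q) * (((⌊((N:ℝ) - (a:ℝ)) / (q:ℝ)⌋ : ℤ) : ℂ) + 1)
          = if a ≤ N then g (a : ZMod q) else 0 := by
        intro a ha
        simp only [Finset.mem_Icc] at ha
        rcases le_or_gt a N with h | h
        · have h0 : ⌊((N:ℝ) - (a:ℝ)) / (q:ℝ)⌋ = 0 := by
            rw [Int.floor_eq_zero_iff]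
            constructor
            · apply div_nonneg _ hq'.le
              have : (a:ℝ) ≤ N := by exact_mod_cast h
              linarith
            · rw [div_lt_one hq']
              have h1 : (1:ℝ) ≤ a := by exact_mod_cast ha.1
              have h2 : (N:ℝ) < q := by exact_mod_cast hN
              linarith
          rw [h0]
          simp [h]
        · have h0 : ⌊((N:ℝ) - (a:ℝ)) / (q:ℝ)⌋ = -1 := by
            apply Int.floor_eq_iff.mpr
            have h1 : (a:ℝ) ≤ q := by exact_mod_cast ha.2
            have h2 : (N:ℝ) < a := by exact_mod_cast h
            constructor
            · push_cast
              rw [le_div_iff₀ hq']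
              linarith
            · push_cast
              rw [div_lt_iff₀ hq']
              linarith
          rw [h0]
          simp [not_le.mpr h]
      rw [Finset.sum_congr rfl key, Finset.sum_ite, Finset.sum_const_zero, add_zero]
      have : Finset.filter (fun a => a ≤ N) (Finset.Icc 1 q) = Finset.Icc 1 N := by
        ext a
        simp only [Finset.mem_filter, Finset.mem_Icc]
        omega
      rw [this]
    · have ihN := ih (N - q) (by omega)
      have hcast : ((N - q : ℕ) : ℝ) = (N:ℝ) - q := by push_cast [hN]; ring
      have lhs_split : ∑ n ∈ Finset.Icc 1 N, g (n : ZMod q)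
          = ∑ n ∈ Finset.Icc 1 (N - q), g (n : ZMod q) + ∑ x : ZMod q, g x := by
        rw [icc_eq_ioc, icc_eq_ioc,
          ← Finset.sum_Ioc_consecutive _ (Nat.zero_le (N - q)) (Nat.sub_le N q)]
        congr 1
        rw [← Finset.Ico_add_one_add_one_eq_Ioc, Finset.sum_Ico_eq_sum_range]
        have : N + 1 - (N - q + 1) = q := by omega
        rw [this]
        exact sum_shift_zmod q g (N - q + 1)
      have rhs_split : ∀ a ∈ Finset.Icc 1 q,
          g (a:ZMod q) * (((⌊((N:ℝ) - (a:ℝ)) / (q:ℝ)⌋ : ℤ) : ℂ) + 1)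
          = g (a:ZMod q) * (((⌊(((N - q : ℕ):ℝ) - (a:ℝ)) / (q:ℝ)⌋ : ℤ) : ℂ) + 1)
            + g (a:ZMod q) := by
        intro a _
        have e : (((N - q : ℕ):ℝ) - (a:ℝ)) / (q:ℝ) = ((N:ℝ) - (a:ℝ)) / (q:ℝ) - 1 := by
          rw [hcast]; field_simp; ring
        rw [e, show ((N:ℝ) - (a:ℝ)) / (q:ℝ) - 1 = ((N:ℝ) - (a:ℝ)) / (q:ℝ) - ((1:ℤ):ℝ) by
          norm_num, Int.floor_sub_intCast]
        push_cast
        ring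
      rw [lhs_split, ihN, Finset.sum_congr rfl rhs_split, Finset.sum_add_distrib]
      congr 1
      exact (sum_icc_zmod q g).symm

lemma Sc_eq (q : ℕ) [NeZero q] (g : ZMod q → ℂ) (hg0 : g 0 = 0)
    (hgsum : ∑ x : ZMod q, g x = 0) {t : ℝ} (ht : 0 ≤ t) :
    ∑ n ∈ Finset.Icc 0 ⌊t⌋₊, g (n : ZMod q) =
      (∑ a ∈ Finset.Icc 1 q, g (a : ZMod q) * (((1:ℝ)/2 - (a:ℝ)/q : ℝ) : ℂ))
      - ∑ a ∈ Finset.Icc 1 q, g (a : ZMod q) * ((sawtooth ((t - a)/q) : ℝ) : ℂ) := by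
  have hq : 0 < q := Nat.pos_of_ne_zero (NeZero.ne q)
  have hq' : (0:ℝ) < q := by exact_mod_cast hq
  have h0 : ∑ n ∈ Finset.Icc 0 ⌊t⌋₊, g (n : ZMod q) = ∑ n ∈ Finset.Icc 1 ⌊t⌋₊, g (n : ZMod q) := by
    have : Finset.Icc 0 ⌊t⌋₊ = insert 0 (Finset.Icc 1 ⌊t⌋₊) := by
      ext n; simp only [Finset.mem_Icc, Finset.mem_insert]; omega
    rw [this, Finset.sum_insert (by simp), Nat.cast_zero, hg0, zero_add]
  rw [h0, count_sum q g ⌊t⌋₊]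
  have key : ∀ a ∈ Finset.Icc 1 q,
      g (a : ZMod q) * (((⌊(((⌊t⌋₊:ℕ):ℝ) - (a:ℝ)) / (q:ℝ)⌋ : ℤ) : ℂ) + 1)
      = g (a : ZMod q) * ((t/q : ℝ) : ℂ) + g (a : ZMod q) * (((1:ℝ)/2 - (a:ℝ)/q : ℝ) : ℂ)
        - g (a : ZMod q) * ((sawtooth ((t - a)/q) : ℝ) : ℂ) := by
    intro a _
    have e1 : ((⌊t⌋₊:ℕ):ℝ) = ((⌊t⌋ : ℤ) : ℝ) := by
      exact_mod_cast congrArg (Int.cast : ℤ → ℝ) (Int.natCast_floor_eq_floor ht)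
    have e2 : ⌊(((⌊t⌋₊:ℕ):ℝ) - (a:ℝ)) / (q:ℝ)⌋ = ⌊(t - a)/q⌋ := by
      rw [e1, show ((⌊t⌋ : ℤ) : ℝ) - (a:ℝ) = ((⌊t⌋ - a : ℤ) : ℝ) by push_cast; ring,
        show (⌊t⌋ - (a:ℤ) : ℤ) = ⌊t - (a:ℕ)⌋ from (Int.floor_sub_natCast t a).symm]
      exact floor_div_floor _ hq
    rw [e2]
    have e3 : ((⌊(t - a)/q⌋ : ℤ) : ℂ) + 1
        = ((t/q : ℝ):ℂ) + (((1:ℝ)/2 - (a:ℝ)/q : ℝ):ℂ) - ((sawtooth ((t - a)/q) : ℝ):ℂ) := by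
      have : (⌊(t - a)/q⌋ : ℝ) = (t-a)/q - sawtooth ((t-a)/q) - 1/2 := by
        rw [sawtooth]; ring
      have : ((⌊(t - a)/q⌋ : ℤ) : ℝ) + 1
          = (t/q : ℝ) + ((1:ℝ)/2 - (a:ℝ)/q) - sawtooth ((t - a)/q) := by
        rw [this]; field_simp; ring
      calc ((⌊(t - a)/q⌋ : ℤ) : ℂ) + 1
          = (((⌊(t - a)/q⌋ : ℝ) + 1 : ℝ) : ℂ) := by push_cast; ring
        _ = _ := by rw [this]; push_cast; ring
    rw [e3]; ring
  rw [Finset.sum_congr rfl key]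
  rw [Finset.sum_sub_distrib, Finset.sum_add_distrib]
  have : ∑ a ∈ Finset.Icc 1 q, g (a : ZMod q) * ((t/q : ℝ) : ℂ) = 0 := by
    rw [← Finset.sum_mul, sum_icc_zmod, hgsum, zero_mul]
  rw [this, zero_add]

lemma Sc_bound (q : ℕ) [NeZero q] (g : ZMod q → ℂ) (hg0 : g 0 = 0)
    (hgsum : ∑ x : ZMod q, g x = 0) (hg1 : ∀ x, ‖g x‖ ≤ 1) {t : ℝ} (ht : 0 ≤ t) :
    ‖∑ n ∈ Finset.Icc 0 ⌊t⌋₊, g (n : ZMod q)‖ ≤ q := by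
  have hq : 0 < q := Nat.pos_of_ne_zero (NeZero.ne q)
  have hq' : (0:ℝ) < q := by exact_mod_cast hq
  rw [Sc_eq q g hg0 hgsum ht]
  have habs : ∀ u : ℝ, |sawtooth u| ≤ 1/2 := by
    intro u
    have h1 := Int.fract_nonneg u
    have h2 := Int.fract_lt_one u
    have : sawtooth u = Int.fract u - 1/2 := by rw [sawtooth, Int.self_sub_floor]
    rw [this, abs_le]; constructor <;> nlinarith
  have b1 : ‖∑ a ∈ Finset.Icc 1 q, g (a : ZMod q) * (((1:ℝ)/2 - (a:ℝ)/q : ℝ) : ℂ)‖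
      ≤ (q:ℝ) * (1/2) := by
    refine le_trans (norm_sum_le _ _) ?_
    calc ∑ a ∈ Finset.Icc 1 q, ‖g (a : ZMod q) * (((1:ℝ)/2 - (a:ℝ)/q : ℝ) : ℂ)‖
        ≤ ∑ _a ∈ Finset.Icc 1 q, (1/2 : ℝ) := by
          refine Finset.sum_le_sum fun a ha => ?_
          simp only [Finset.mem_Icc] at ha
          rw [norm_mul, Complex.norm_real]
          have h1 : (1:ℝ) ≤ a := by exact_mod_cast ha.1
          have h2 : (a:ℝ) ≤ q := by exact_mod_cast ha.2
          have hda : (a:ℝ)/q ≤ 1 := by rw [div_le_one hq']; linarith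
          have hda2 : 0 < (a:ℝ)/q := by positivity
          have : |(1:ℝ)/2 - (a:ℝ)/q| ≤ 1/2 := by rw [abs_le]; constructor <;> nlinarith
          calc ‖g ((a:ℕ) : ZMod q)‖ * ‖((1:ℝ)/2 - (a:ℝ)/q : ℝ)‖
              ≤ 1 * (1/2) := by
                apply mul_le_mul (hg1 _) (by rwa [Real.norm_eq_abs]) (norm_nonneg _) zero_le_one
            _ = 1/2 := by ring
      _ = (q:ℝ) * (1/2) := by rw [Finset.sum_const, Nat.card_Icc]; simp
  have b2 : ‖∑ a ∈ Finset.Icc 1 q, g (a : ZMod q) * ((sawtooth ((t - a)/q) : ℝ) : ℂ)‖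
      ≤ (q:ℝ) * (1/2) := by
    refine le_trans (norm_sum_le _ _) ?_
    calc ∑ a ∈ Finset.Icc 1 q, ‖g (a : ZMod q) * ((sawtooth ((t - a)/q) : ℝ) : ℂ)‖
        ≤ ∑ _a ∈ Finset.Icc 1 q, (1/2 : ℝ) := by
          refine Finset.sum_le_sum fun a ha => ?_
          rw [norm_mul, Complex.norm_real]
          calc ‖g ((a:ℕ) : ZMod q)‖ * ‖sawtooth ((t - a)/q)‖
              ≤ 1 * (1/2) := by
                apply mul_le_mul (hg1 _) ?_ (norm_nonneg _) zero_le_one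
                rw [Real.norm_eq_abs]; exact habs _
            _ = 1/2 := by ring
      _ = (q:ℝ) * (1/2) := by rw [Finset.sum_const, Nat.card_Icc]; simp
  calc ‖_ - _‖ ≤ (q:ℝ) * (1/2) + (q:ℝ) * (1/2) := norm_sub_le_of_le b1 b2
    _ = q := by ring

lemma hasDeriv_cpow_neg {s : ℂ} (hs : s ≠ 0) {t : ℝ} (ht : 0 < t) :
    HasDerivAt (fun u : ℝ => (u:ℂ)^(-s)) (-s * (t:ℂ)^(-s-1)) t := by
  have hr : (-s-1 : ℂ) ≠ -1 := by intro h; apply hs; linear_combination -h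
  have h := hasDerivAt_ofReal_cpow_const' (ne_of_gt ht) hr
  have h2 := h.const_mul (-s)
  have e : (fun y : ℝ => -s * ((y:ℂ)^(-s-1+1)/(-s-1+1))) = fun y : ℝ => (y:ℂ)^(-s) := by
    funext y
    rw [show (-s-1+1 : ℂ) = -s by ring]
    field_simp
  rwa [e] at h2

lemma contAt_cpow (w : ℂ) {t : ℝ} (ht : 0 < t) : ContinuousAt (fun u : ℝ => (u:ℂ)^w) t :=
  continuousAt_ofReal_cpow_const t w (Or.inr (ne_of_gt ht))

lemma meas_S (c : ℕ → ℂ) : Measurable (fun t : ℝ => ∑ k ∈ Finset.Icc 0 ⌊t⌋₊, c k) :=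
  Measurable.comp (f := fun t : ℝ => ⌊t⌋₊) (g := fun n => ∑ k ∈ Finset.Icc 0 n, c k)
    measurable_from_nat Nat.measurable_floor

lemma integrableOn_cpow_mul {X : ℝ} (hX : 0 < X) {s : ℂ} (hs : 0 < s.re) {g : ℝ → ℂ}
    (hg : Measurable g) {B : ℝ} (hB : ∀ t, X < t → ‖g t‖ ≤ B) :
    IntegrableOn (fun t : ℝ => (t:ℂ)^(-s-1) * g t) (Set.Ioi X) := by
  have hint : IntegrableOn (fun t : ℝ => B * t^(-s.re-1)) (Set.Ioi X) :=
    (integrableOn_Ioi_rpow_of_lt (by linarith) hX).const_mul B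
  refine Integrable.mono' hint ?_ ?_
  · apply AEStronglyMeasurable.mul
    · refine ContinuousOn.aestronglyMeasurable ?_ measurableSet_Ioi
      intro t ht
      exact (contAt_cpow _ (hX.trans ht)).continuousWithinAt
    · exact hg.aestronglyMeasurable.restrict
  · filter_upwards [ae_restrict_mem measurableSet_Ioi] with t ht
    rw [norm_mul]
    have hpos : (0:ℝ) < t := hX.trans ht
    have h1 : ‖(t:ℂ)^(-s-1)‖ = t^(-s.re-1) := by
      rw [Complex.norm_cpow_eq_rpow_re_of_pos hpos]
      norm_num
    rw [h1, mul_comm B _]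
    exact mul_le_mul_of_nonneg_left (hB t ht) (Real.rpow_nonneg hpos.le _)

lemma abel_formula (c : ℕ → ℂ) {s : ℂ} (hs : 0 < s.re) {X : ℝ} (hX : 0 < X) {m : ℕ}
    (hm : X ≤ m) :
    ∑ k ∈ Finset.Ioc ⌊X⌋₊ m, (k:ℂ)^(-s) * c k =
      (m:ℂ)^(-s) * (∑ k ∈ Finset.Icc 0 m, c k)
      - (X:ℂ)^(-s) * (∑ k ∈ Finset.Icc 0 ⌊X⌋₊, c k)
      + s * ∫ t in Set.Ioc X (m:ℝ), (t:ℂ)^(-s-1) * (∑ k ∈ Finset.Icc 0 ⌊t⌋₊, c k) := by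
  have hs0 : s ≠ 0 := fun h => by simp [h] at hs
  have hdiff : ∀ t ∈ Set.Icc X (m:ℝ), DifferentiableAt ℝ (fun u : ℝ => (u:ℂ)^(-s)) t :=
    fun t ht => (hasDeriv_cpow_neg hs0 (lt_of_lt_of_le hX ht.1)).differentiableAt
  have hcont : ContinuousOn (fun t : ℝ => -s * (t:ℂ)^(-s-1)) (Set.Icc X (m:ℝ)) := by
    intro t ht
    exact (ContinuousAt.const_smul (contAt_cpow (-s-1) (lt_of_lt_of_le hX ht.1)) (-s)).continuousWithinAt
  have hint : IntegrableOn (deriv (fun u : ℝ => (u:ℂ)^(-s))) (Set.Icc X (m:ℝ)) := by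
    refine (hcont.integrableOn_Icc).congr_fun ?_ measurableSet_Icc
    intro t ht
    exact ((hasDeriv_cpow_neg hs0 (lt_of_lt_of_le hX ht.1)).deriv).symm
  have h := sum_mul_eq_sub_sub_integral_mul c hX.le hm hdiff hint
  rw [Nat.floor_natCast] at h
  push_cast at h
  rw [h]
  have hIcongr : ∫ t in Set.Ioc X (m:ℝ), deriv (fun u : ℝ => (u:ℂ)^(-s)) t *
        (∑ k ∈ Finset.Icc 0 ⌊t⌋₊, c k)
      = ∫ t in Set.Ioc X (m:ℝ), (-s * (t:ℂ)^(-s-1)) * (∑ k ∈ Finset.Icc 0 ⌊t⌋₊, c k) := by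
    refine setIntegral_congr_fun measurableSet_Ioc fun t ht => ?_
    rw [(hasDeriv_cpow_neg hs0 (lt_of_lt_of_le hX ht.1.le)).deriv]
  rw [hIcongr]
  have : ∫ t in Set.Ioc X (m:ℝ), (-s * (t:ℂ)^(-s-1)) * (∑ k ∈ Finset.Icc 0 ⌊t⌋₊, c k)
      = -s * ∫ t in Set.Ioc X (m:ℝ), (t:ℂ)^(-s-1) * (∑ k ∈ Finset.Icc 0 ⌊t⌋₊, c k) := by
    rw [← integral_const_mul]
    congr 1
    funext t
    ring
  rw [this]
  ring

lemma integral_rpow_tail {σ : ℝ} (hσ : 0 < σ) {Y : ℝ} (hY : 0 < Y) :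
    ∫ t in Set.Ioi Y, t ^ (-σ-1) = Y ^ (-σ) / σ := by
  rw [integral_Ioi_rpow_of_lt (by linarith) hY]
  rw [show -σ-1+1 = -σ by ring]
  field_simp

lemma remainder_bound (c : ℕ → ℂ) {B : ℝ} (hB0 : 0 ≤ B)
    (hSB : ∀ t : ℝ, 0 ≤ t → ‖∑ k ∈ Finset.Icc 0 ⌊t⌋₊, c k‖ ≤ B)
    {s : ℂ} (hs : 0 < s.re) {X : ℝ} (hX : 0 < X) {m : ℕ} (hmX : X ≤ m) (hm1 : 1 ≤ m) :
    ‖(-(X:ℂ)^(-s) * (∑ k ∈ Finset.Icc 0 ⌊X⌋₊, c k)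
        + s * ∫ t in Set.Ioi X, (t:ℂ)^(-s-1) * (∑ k ∈ Finset.Icc 0 ⌊t⌋₊, c k))
      - ∑ k ∈ Finset.Ioc ⌊X⌋₊ m, (k:ℂ)^(-s) * c k‖
      ≤ B * (m:ℝ)^(-s.re) + ‖s‖ * (B * ((m:ℝ)^(-s.re) / s.re)) := by
  have hm0 : (0:ℝ) < m := lt_of_lt_of_le hX hmX
  have hIX : IntegrableOn (fun t : ℝ => (t:ℂ)^(-s-1) * (∑ k ∈ Finset.Icc 0 ⌊t⌋₊, c k))
      (Set.Ioi X) :=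
    integrableOn_cpow_mul hX hs (meas_S c) (fun t ht => hSB t (le_of_lt (hX.trans ht)))
  have hsplit : ∫ t in Set.Ioi X, (t:ℂ)^(-s-1) * (∑ k ∈ Finset.Icc 0 ⌊t⌋₊, c k)
      = (∫ t in Set.Ioc X (m:ℝ), (t:ℂ)^(-s-1) * (∑ k ∈ Finset.Icc 0 ⌊t⌋₊, c k))
        + ∫ t in Set.Ioi (m:ℝ), (t:ℂ)^(-s-1) * (∑ k ∈ Finset.Icc 0 ⌊t⌋₊, c k) := by
    rw [← setIntegral_union (Set.Ioc_disjoint_Ioi le_rfl) measurableSet_Ioi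
      (hIX.mono_set Set.Ioc_subset_Ioi_self) (hIX.mono_set (Set.Ioi_subset_Ioi hmX)),
      Set.Ioc_union_Ioi_eq_Ioi hmX]
  rw [abel_formula c hs hX hmX, hsplit]
  have heq : (-(X:ℂ)^(-s) * (∑ k ∈ Finset.Icc 0 ⌊X⌋₊, c k)
        + s * ((∫ t in Set.Ioc X (m:ℝ), (t:ℂ)^(-s-1) * (∑ k ∈ Finset.Icc 0 ⌊t⌋₊, c k))
          + ∫ t in Set.Ioi (m:ℝ), (t:ℂ)^(-s-1) * (∑ k ∈ Finset.Icc 0 ⌊t⌋₊, c k)))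
      - ((m:ℂ)^(-s) * (∑ k ∈ Finset.Icc 0 m, c k)
        - (X:ℂ)^(-s) * (∑ k ∈ Finset.Icc 0 ⌊X⌋₊, c k)
        + s * ∫ t in Set.Ioc X (m:ℝ), (t:ℂ)^(-s-1) * (∑ k ∈ Finset.Icc 0 ⌊t⌋₊, c k))
      = s * (∫ t in Set.Ioi (m:ℝ), (t:ℂ)^(-s-1) * (∑ k ∈ Finset.Icc 0 ⌊t⌋₊, c k))
        - (m:ℂ)^(-s) * (∑ k ∈ Finset.Icc 0 m, c k) := by ring
  rw [heq]
  have hdom : IntegrableOn (fun t : ℝ => B * t ^ (-s.re-1)) (Set.Ioi (m:ℝ)) :=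
    (integrableOn_Ioi_rpow_of_lt (by linarith) hm0).const_mul B
  have hnormint : ‖∫ t in Set.Ioi (m:ℝ), (t:ℂ)^(-s-1) * (∑ k ∈ Finset.Icc 0 ⌊t⌋₊, c k)‖
      ≤ B * ((m:ℝ)^(-s.re) / s.re) := by
    have h1 : ‖∫ t in Set.Ioi (m:ℝ), (t:ℂ)^(-s-1) * (∑ k ∈ Finset.Icc 0 ⌊t⌋₊, c k)‖
        ≤ ∫ t in Set.Ioi (m:ℝ), B * t ^ (-s.re-1) := by
      refine norm_integral_le_of_norm_le hdom ?_
      filter_upwards [ae_restrict_mem measurableSet_Ioi] with t ht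
      have hpos : (0:ℝ) < t := hm0.trans ht
      rw [norm_mul]
      have h2 : ‖(t:ℂ)^(-s-1)‖ = t^(-s.re-1) := by
        rw [Complex.norm_cpow_eq_rpow_re_of_pos hpos]
        norm_num
      rw [h2, mul_comm B _]
      exact mul_le_mul_of_nonneg_left (hSB t hpos.le) (Real.rpow_nonneg hpos.le _)
    rw [integral_const_mul, integral_rpow_tail hs hm0] at h1
    exact h1
  have hcpow : ‖(m:ℂ)^(-s)‖ = (m:ℝ)^(-s.re) := by
    rw [show ((m:ℕ):ℂ) = (((m:ℕ):ℝ):ℂ) by push_cast; rfl,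
      Complex.norm_cpow_eq_rpow_re_of_pos hm0]
    norm_num
  calc ‖_ - _‖ ≤ ‖s * ∫ t in Set.Ioi (m:ℝ), (t:ℂ)^(-s-1) * (∑ k ∈ Finset.Icc 0 ⌊t⌋₊, c k)‖
        + ‖(m:ℂ)^(-s) * (∑ k ∈ Finset.Icc 0 m, c k)‖ := norm_sub_le _ _
    _ ≤ ‖s‖ * (B * ((m:ℝ)^(-s.re) / s.re)) + (m:ℝ)^(-s.re) * B := by
        gcongr
        · rw [norm_mul]
          exact mul_le_mul_of_nonneg_left hnormint (norm_nonneg s)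
        · rw [norm_mul, hcpow]
          refine mul_le_mul_of_nonneg_left ?_ (Real.rpow_nonneg hm0.le _)
          have := hSB (m:ℝ) hm0.le
          rwa [Nat.floor_natCast] at this
    _ = B * (m:ℝ)^(-s.re) + ‖s‖ * (B * ((m:ℝ)^(-s.re) / s.re)) := by ring

section

variable (q : ℕ) [NeZero q] (χ : DirichletCharacter ℂ q)

noncomputable def Gfun (X : ℝ) (s : ℂ) : ℂ :=
  -(X:ℂ)^(-s) * (∑ k ∈ Finset.Icc 0 ⌊X⌋₊, χ (k : ZMod q))
    + s * ∫ t in Set.Ioi X, (t:ℂ)^(-s-1) * (∑ k ∈ Finset.Icc 0 ⌊t⌋₊, χ (k : ZMod q))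

noncomputable def Ffun (X : ℝ) (m : ℕ) (s : ℂ) : ℂ :=
  ∑ k ∈ Finset.Ioc ⌊X⌋₊ m, (k:ℂ)^(-s) * χ (k : ZMod q)

theorem key_identity (hq : 2 ≤ q) (hB : ∀ t : ℝ, 0 ≤ t → ‖∑ k ∈ Finset.Icc 0 ⌊t⌋₊, χ (k : ZMod q)‖ ≤ q)
    (hχ : χ ≠ 1) {X : ℝ} (hX : 0 < X) {s₀ : ℂ} (hs₀ : 0 < s₀.re) :
    χ.LFunction s₀ = (∑ k ∈ Finset.Icc 0 ⌊X⌋₊, (k:ℂ)^(-s₀) * χ (k : ZMod q)) + Gfun q χ X s₀ := by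
  set c : ℕ → ℂ := fun n => χ (n : ZMod q) with hc
  have hq0 : (0:ℝ) ≤ q := Nat.cast_nonneg q
  set U : Set ℂ := {s : ℂ | 0 < s.re} with hU
  have hUopen : IsOpen U := isOpen_lt continuous_const Complex.continuous_re
  set N : ℕ := ⌊X⌋₊ with hN
  -- rate function
  have hrate : ∀ {σ : ℝ}, 0 < σ → Tendsto (fun m : ℕ => (m:ℝ)^(-σ)) atTop (𝓝 0) := by
    intro σ hσ
    exact (tendsto_rpow_neg_atTop hσ).comp tendsto_natCast_atTop_atTop
  -- pointwise convergence
  have hconv : ∀ s ∈ U, Tendsto (fun m => Ffun q χ X m s) atTop (𝓝 (Gfun q χ X s)) := by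
    intro s hs
    have hsre : 0 < s.re := hs
    have hb : Tendsto (fun m : ℕ => (q:ℝ) * (m:ℝ)^(-s.re)
        + ‖s‖ * ((q:ℝ) * ((m:ℝ)^(-s.re) / s.re))) atTop (𝓝 0) := by
      have h1 := (hrate hsre).const_mul (q:ℝ)
      have h2 := (((hrate hsre).div_const s.re).const_mul (q:ℝ)).const_mul ‖s‖
      simpa using h1.add h2
    have hev : ∀ᶠ m : ℕ in atTop, ‖Ffun q χ X m s - Gfun q χ X s‖
        ≤ (q:ℝ) * (m:ℝ)^(-s.re) + ‖s‖ * ((q:ℝ) * ((m:ℝ)^(-s.re) / s.re)) := by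
      filter_upwards [eventually_ge_atTop 1,
        eventually_ge_atTop (Nat.ceil X)] with m hm1 hmX
      have hmX' : X ≤ (m:ℝ) := le_trans (Nat.le_ceil X) (by exact_mod_cast hmX)
      rw [norm_sub_rev]
      exact remainder_bound c hq0 hB hsre hX hmX' hm1
    rw [tendsto_sub_nhds_zero_iff.symm]
    exact squeeze_zero_norm' hev hb
  -- locally uniform convergence
  have hunif : TendstoLocallyUniformlyOn (Ffun q χ X) (Gfun q χ X) atTop U := by
    rw [tendstoLocallyUniformlyOn_iff_forall_isCompact hUopen]
    intro K hKU hK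
    rcases K.eq_empty_or_nonempty with rfl | hne
    · exact tendstoUniformlyOn_empty
    obtain ⟨sδ, hsδK, hδmin'⟩ := hK.exists_isMinOn hne Complex.continuous_re.continuousOn
    have hδmin : ∀ y ∈ K, sδ.re ≤ y.re := fun y hy => isMinOn_iff.mp hδmin' y hy
    set δ : ℝ := sδ.re with hδ
    have hδ0 : 0 < δ := hKU hsδK
    obtain ⟨sM, _, hMmax'⟩ := hK.exists_isMaxOn hne continuous_norm.continuousOn
    have hMmax : ∀ y ∈ K, ‖y‖ ≤ ‖sM‖ := fun y hy => isMaxOn_iff.mp hMmax' y hy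
    set M : ℝ := ‖sM‖ with hM
    rw [Metric.tendstoUniformlyOn_iff]
    intro ε hε
    have hb : Tendsto (fun m : ℕ => (q:ℝ) * (m:ℝ)^(-δ)
        + M * ((q:ℝ) * ((m:ℝ)^(-δ) / δ))) atTop (𝓝 0) := by
      have h1 := (hrate hδ0).const_mul (q:ℝ)
      have h2 := (((hrate hδ0).div_const δ).const_mul (q:ℝ)).const_mul M
      simpa using h1.add h2
    filter_upwards [eventually_ge_atTop 1, eventually_ge_atTop (Nat.ceil X),
      hb.eventually (eventually_lt_nhds hε)] with m hm1 hmX hmb s hsK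
    have hsre : 0 < s.re := hKU hsK
    have hm1' : (1:ℝ) ≤ (m:ℝ) := by exact_mod_cast hm1
    have hmX' : X ≤ (m:ℝ) := le_trans (Nat.le_ceil X) (by exact_mod_cast hmX)
    rw [dist_eq_norm]
    have key := remainder_bound c hq0 hB hsre hX hmX' hm1
    have hmono : (m:ℝ)^(-s.re) ≤ (m:ℝ)^(-δ) :=
      Real.rpow_le_rpow_of_exponent_le hm1' (by have := hδmin s hsK; linarith)
    have hless : (q:ℝ) * (m:ℝ)^(-s.re) + ‖s‖ * ((q:ℝ) * ((m:ℝ)^(-s.re) / s.re))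
        ≤ (q:ℝ) * (m:ℝ)^(-δ) + M * ((q:ℝ) * ((m:ℝ)^(-δ) / δ)) := by
      have hδle : δ ≤ s.re := hδmin s hsK
      have hsM : ‖s‖ ≤ M := hMmax s hsK
      gcongr
    calc ‖Gfun q χ X s - Ffun q χ X m s‖
        ≤ (q:ℝ) * (m:ℝ)^(-s.re) + ‖s‖ * ((q:ℝ) * ((m:ℝ)^(-s.re) / s.re)) := key
      _ ≤ (q:ℝ) * (m:ℝ)^(-δ) + M * ((q:ℝ) * ((m:ℝ)^(-δ) / δ)) := hless
      _ < ε := hmb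
  -- each F m is differentiable
  haveI : Fact (1 < q) := ⟨hq⟩
  have htermdiff : ∀ k : ℕ, Differentiable ℂ (fun s : ℂ => (k:ℂ)^(-s) * c k) := by
    intro k
    rcases Nat.eq_zero_or_pos k with rfl | hk
    · have hc0 : c 0 = 0 := by
        rw [hc]; simp only [Nat.cast_zero]
        exact MulChar.map_nonunit _ not_isUnit_zero
      have he : (fun s : ℂ => ((0:ℕ):ℂ)^(-s) * c 0) = fun _ => 0 := by
        funext s; rw [hc0, mul_zero]
      rw [he]
      exact differentiable_const 0
    · have hk0 : (k:ℂ) ≠ 0 := by exact_mod_cast hk.ne'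
      exact ((differentiable_id.neg).const_cpow (Or.inl hk0)).mul_const _
  have hFdiff : ∀ m : ℕ, Differentiable ℂ (Ffun q χ X m) := by
    intro m
    unfold Ffun
    exact Differentiable.fun_sum (A := fun (k : ℕ) (x : ℂ) => ((k:ℕ):ℂ)^(-x) * c k)
      fun k _ => htermdiff k
  have hGdiff : DifferentiableOn ℂ (Gfun q χ X) U :=
    hunif.differentiableOn (Eventually.of_forall fun m => (hFdiff m).differentiableOn) hUopen
  -- partial sum is entire
  have hPdiff : Differentiable ℂ (fun s : ℂ => ∑ k ∈ Finset.Icc 0 N, (k:ℂ)^(-s) * c k) :=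
    Differentiable.fun_sum (A := fun (k : ℕ) (x : ℂ) => ((k:ℕ):ℂ)^(-x) * c k)
      fun k _ => htermdiff k
  -- identity on re > 1
  have hL : ∀ s : ℂ, 1 < s.re →
      χ.LFunction s = (∑ k ∈ Finset.Icc 0 N, (k:ℂ)^(-s) * c k) + Gfun q χ X s := by
    intro s hs
    have hsum : LSeriesSummable (fun n : ℕ => χ (n : ZMod q)) s :=
      DirichletCharacter.LSeriesSummable_of_one_lt_re χ hs
    have hterm : ∀ m : ℕ, ∑ k ∈ Finset.Icc 0 m, (k:ℂ)^(-s) * c k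
        = ∑ i ∈ Finset.range (m+1), LSeries.term (fun n : ℕ => χ (n : ZMod q)) s i := by
      intro m
      rw [Finset.range_eq_Ico, ← Finset.Ico_add_one_right_eq_Icc]
      apply Finset.sum_congr rfl
      intro k _
      rcases Nat.eq_zero_or_pos k with rfl | hk
      · have hc0 : c 0 = 0 := by
          rw [hc]; simp only [Nat.cast_zero]
          exact MulChar.map_nonunit _ not_isUnit_zero
        rw [hc0, mul_zero, LSeries.term_zero]
      · rw [LSeries.term_of_ne_zero hk.ne']
        rw [Complex.cpow_neg]
        field_simp [hc]
        rfl
    have htend : Tendsto (fun m : ℕ => ∑ k ∈ Finset.Icc 0 m, (k:ℂ)^(-s) * c k) atTop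
        (𝓝 (χ.LFunction s)) := by
      rw [DirichletCharacter.LFunction_eq_LSeries χ hs]
      have h1 := hsum.hasSum.tendsto_sum_nat
      have h2 := h1.comp (tendsto_add_atTop_nat 1)
      convert h2 using 2 with m
      · exact hterm m
      · rfl
    have hsplit : ∀ᶠ m : ℕ in atTop, Ffun q χ X m s =
        (∑ k ∈ Finset.Icc 0 m, (k:ℂ)^(-s) * c k) - ∑ k ∈ Finset.Icc 0 N, (k:ℂ)^(-s) * c k := by
      filter_upwards [eventually_ge_atTop N] with m hm
      have hu : Finset.Icc 0 m = Finset.Icc 0 N ∪ Finset.Ioc N m := by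
        ext x
        simp only [Finset.mem_Icc, Finset.mem_union, Finset.mem_Ioc]
        omega
      have hdisj : Disjoint (Finset.Icc 0 N) (Finset.Ioc N m) := by
        rw [Finset.disjoint_left]
        intro x hx hx'
        simp only [Finset.mem_Icc] at hx
        simp only [Finset.mem_Ioc] at hx'
        omega
      rw [Ffun, hu, Finset.sum_union hdisj]
      ring
    have htendF : Tendsto (fun m : ℕ => Ffun q χ X m s) atTop
        (𝓝 (χ.LFunction s - ∑ k ∈ Finset.Icc 0 N, (k:ℂ)^(-s) * c k)) := by
      apply Tendsto.congr' (EventuallyEq.symm hsplit)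
      exact htend.sub tendsto_const_nhds
    have hUs : s ∈ U := by
      simp only [hU, Set.mem_setOf_eq]; linarith
    have := tendsto_nhds_unique htendF (hconv s hUs)
    linear_combination this
  -- identity theorem
  have hpre : IsPreconnected U := (convex_halfSpace_re_gt (0:ℝ)).isPreconnected
  have h2U : (2:ℂ) ∈ U := by
    show (0:ℝ) < (2:ℂ).re
    norm_num
  have hev : (fun s : ℂ => χ.LFunction s) =ᶠ[nhds (2:ℂ)]
      (fun s : ℂ => (∑ k ∈ Finset.Icc 0 N, (k:ℂ)^(-s) * c k) + Gfun q χ X s) := by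
    have hopen1 : IsOpen {s : ℂ | 1 < s.re} := isOpen_lt continuous_const Complex.continuous_re
    refine eventually_of_mem (hopen1.mem_nhds (by norm_num)) ?_
    intro s hs
    exact hL s hs
  have heq := AnalyticOnNhd.eqOn_of_preconnected_of_eventuallyEq
    ((DirichletCharacter.differentiable_LFunction hχ).differentiableOn.analyticOnNhd hUopen)
    ((hPdiff.differentiableOn.add hGdiff).analyticOnNhd hUopen)
    hpre h2U hev
  exact heq hs₀

end


end AFEAux

open AFEAux MeasureTheory Filter Topology in
/-- Exact AFE for `L(s,χ)` for real `s > 0` and a primitive character `χ (mod q)`, `q ≥ 2`,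
with remainder `≪ q X^{−s}`. -/
theorem LFunction_real_afe :
    ∃ C : ℝ, 0 < C ∧
      ∀ (q : ℕ) [NeZero q], 2 ≤ q →
      ∀ (χ : DirichletCharacter ℂ q), χ.IsPrimitive →
      ∀ (s : ℝ), 0 < s →
      ∀ (X : ℝ), 0 < X →
      ∀ E₁ : ℂ,
        E₁ = (X : ℂ) ^ (-(s : ℂ)) *
                ∑ a ∈ Icc 1 q, χ (a : ZMod q) * ((sawtooth ((X - a) / q) : ℝ) : ℂ)
              - (s : ℂ) * (q : ℂ) ^ (-(s : ℂ)) *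
                ∑ a ∈ Icc 1 q, χ (a : ZMod q) *
                  ((∫ u in Set.Ioi (X / q), sawtooth (u - a / q) / u ^ (s + 1) : ℝ) : ℂ) →
        χ.LFunction s = ∑ n ∈ Icc 1 ⌊X⌋₊, χ (n : ZMod q) * (n : ℂ) ^ (-(s : ℂ)) + E₁
          ∧ ‖E₁‖ ≤ C * q * X ^ (-s) := by
  refine ⟨1, one_pos, ?_⟩
  intro q _ hq χ hχprim s hs X hX E₁ hE₁
  haveI : Fact (1 < q) := ⟨hq⟩
  have hq0 : 0 < q := by omega
  have hq' : (0:ℝ) < q := by exact_mod_cast hq0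
  have hs' : (0:ℝ) < s := hs
  have hsC : (s:ℂ) ≠ 0 := by exact_mod_cast (ne_of_lt hs).symm
  -- χ ≠ 1
  have hχ1 : χ ≠ 1 := by
    intro h
    have hcond := hχprim
    rw [DirichletCharacter.IsPrimitive, h, DirichletCharacter.conductor_one] at hcond
    omega
  have hg0Z : χ (0 : ZMod q) = 0 := MulChar.map_nonunit _ not_isUnit_zero
  have hg0 : χ ((0:ℕ) : ZMod q) = 0 := by rw [Nat.cast_zero]; exact hg0Z
  have hgsum : ∑ x : ZMod q, χ x = 0 := MulChar.sum_eq_zero_of_ne_one hχ1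
  have hg1 : ∀ x : ZMod q, ‖χ x‖ ≤ 1 := fun x => χ.norm_le_one x
  have hB : ∀ t : ℝ, 0 ≤ t → ‖∑ k ∈ Finset.Icc 0 ⌊t⌋₊, χ (k : ZMod q)‖ ≤ q :=
    fun t ht => Sc_bound q (fun x => χ x) hg0Z hgsum hg1 ht
  -- the saw sums
  set Ψ : ℝ → ℂ := fun t => ∑ a ∈ Finset.Icc 1 q, χ (a : ZMod q) * ((sawtooth ((t - a)/q) : ℝ) : ℂ)
    with hΨ
  set c₁ : ℂ := ∑ a ∈ Finset.Icc 1 q, χ (a : ZMod q) * (((1:ℝ)/2 - (a:ℝ)/q : ℝ) : ℂ) with hc₁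
  have hSc : ∀ t : ℝ, 0 ≤ t →
      ∑ k ∈ Finset.Icc 0 ⌊t⌋₊, χ (k : ZMod q) = c₁ - Ψ t :=
    fun t ht => Sc_eq q (fun x => χ x) hg0Z hgsum ht
  -- identity from key lemma
  have hsre : 0 < ((s:ℂ)).re := by rwa [Complex.ofReal_re]
  have hid := key_identity q χ hq hB hχ1 hX hsre
  -- partial sums agree
  have hpartial : ∑ k ∈ Finset.Icc 0 ⌊X⌋₊, (k:ℂ)^(-(s:ℂ)) * χ (k : ZMod q)
      = ∑ n ∈ Finset.Icc 1 ⌊X⌋₊, χ (n : ZMod q) * (n : ℂ) ^ (-(s:ℂ)) := by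
    have hins : Finset.Icc 0 ⌊X⌋₊ = insert 0 (Finset.Icc 1 ⌊X⌋₊) := by
      ext n; simp only [Finset.mem_Icc, Finset.mem_insert]; omega
    rw [hins, Finset.sum_insert (by simp), hg0, mul_zero, zero_add]
    exact Finset.sum_congr rfl fun k _ => mul_comm _ _
  -- now compute Gfun = E₁
  have hXq : (0:ℝ) < X / q := div_pos hX hq'
  -- real tail integrals
  set J : ℕ → ℝ := fun a => ∫ u in Set.Ioi (X / q), sawtooth (u - a / q) / u ^ (s + 1) with hJ
  -- the main integral computation
  have hXc : (X:ℂ)^(-(s:ℂ)) = ((X^(-s) : ℝ) : ℂ) := by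
    rw [Complex.ofReal_cpow hX.le, Complex.ofReal_neg]
  have hqc : (q:ℂ)^(-(s:ℂ)) = (((q:ℝ)^(-s) : ℝ) : ℂ) := by
    rw [Complex.ofReal_cpow hq'.le, Complex.ofReal_neg]
    norm_num
  have hcpow_ofReal : ∀ t : ℝ, t ∈ Set.Ioi X → (t:ℂ)^(-(s:ℂ)-1) = ((t ^ (-s-1) : ℝ) : ℂ) := by
    intro t ht
    rw [Complex.ofReal_cpow (le_of_lt (hX.trans ht))]
    congr 1
    push_cast
    ring
  have hint_meas : ∀ a : ℕ, Measurable (fun t : ℝ => ((sawtooth ((t - a)/q) : ℝ) : ℂ)) := by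
    intro a
    exact Complex.measurable_ofReal.comp (meas_saw.comp ((measurable_id.sub_const _).div_const _))
  have hIa : ∀ a : ℕ, IntegrableOn
      (fun t : ℝ => (t:ℂ)^(-(s:ℂ)-1) * ((sawtooth ((t - a)/q) : ℝ) : ℂ)) (Set.Ioi X) := by
    intro a
    refine integrableOn_cpow_mul hX hsre (hint_meas a) (B := 1/2) ?_
    intro t ht
    rw [Complex.norm_real]
    exact norm_saw_le _
  have hI1 : IntegrableOn (fun t : ℝ => (t:ℂ)^(-(s:ℂ)-1) * c₁) (Set.Ioi X) :=
    integrableOn_cpow_mul hX hsre measurable_const (B := ‖c₁‖) (fun t ht => le_rfl)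
  have hsubst : ∀ a : ℕ, ∫ t in Set.Ioi X, t ^ (-s-1) * sawtooth ((t - (a:ℝ))/q)
      = (q:ℝ) ^ (-s) * J a := by
    intro a
    have key := integral_comp_mul_left_Ioi
      (g := fun t : ℝ => t ^ (-s-1) * sawtooth ((t - (a:ℝ))/q)) (X/(q:ℝ)) hq'
    have hqX : (q:ℝ) * (X / q) = X := by field_simp
    rw [hqX, smul_eq_mul] at key
    have hL : ∫ u in Set.Ioi (X/(q:ℝ)), ((q:ℝ)*u) ^ (-s-1) * sawtooth (((q:ℝ)*u - a)/q)
        = (q:ℝ)^(-s-1) * J a := by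
      rw [hJ, ← integral_const_mul]
      refine setIntegral_congr_fun measurableSet_Ioi (fun u hu => ?_)
      have hu0 : (0:ℝ) < u := lt_trans hXq hu
      rw [Real.mul_rpow hq'.le hu0.le,
        show ((q:ℝ)*u - a)/q = u - a/q by field_simp,
        div_eq_mul_inv (sawtooth _), ← Real.rpow_neg hu0.le, show -(s+1) = -s-1 by ring]
      ring
    rw [hL] at key
    have hqq : (q:ℝ)^(-s-1) * (q:ℝ) = (q:ℝ)^(-s) := by
      rw [← Real.rpow_add_one (ne_of_gt hq') (-s-1)]
      norm_num
    calc ∫ t in Set.Ioi X, t ^ (-s-1) * sawtooth ((t - (a:ℝ))/q)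
        = (q:ℝ) * ((q:ℝ)⁻¹ * ∫ t in Set.Ioi X, t ^ (-s-1) * sawtooth ((t - (a:ℝ))/q)) := by
          field_simp
      _ = (q:ℝ) * ((q:ℝ)^(-s-1) * J a) := by rw [← key]
      _ = ((q:ℝ)^(-s-1) * (q:ℝ)) * J a := by ring
      _ = (q:ℝ)^(-s) * J a := by rw [hqq]
  have hofa : ∀ a : ℕ, ∫ t in Set.Ioi X, (t:ℂ)^(-(s:ℂ)-1) * ((sawtooth ((t - a)/q) : ℝ) : ℂ)
      = (((q:ℝ)^(-s) * J a : ℝ) : ℂ) := by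
    intro a
    have : ∫ t in Set.Ioi X, (t:ℂ)^(-(s:ℂ)-1) * ((sawtooth ((t - a)/q) : ℝ) : ℂ)
        = ∫ t in Set.Ioi X, ((t ^ (-s-1) * sawtooth ((t - (a:ℝ))/q) : ℝ) : ℂ) := by
      refine setIntegral_congr_fun measurableSet_Ioi (fun t ht => ?_)
      rw [hcpow_ofReal t ht, ← Complex.ofReal_mul]
    have h2 : ∫ t in Set.Ioi X, ((t ^ (-s-1) * sawtooth ((t - (a:ℝ))/q) : ℝ) : ℂ)
        = ((∫ t in Set.Ioi X, t ^ (-s-1) * sawtooth ((t - (a:ℝ))/q) : ℝ) : ℂ) := integral_ofReal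
    rw [this, h2, hsubst a]
  have hIcpow : ∫ t in Set.Ioi X, (t:ℂ)^(-(s:ℂ)-1) = (((X ^ (-s) / s : ℝ)) : ℂ) := by
    have h2 : ∫ t in Set.Ioi X, ((t ^ (-s-1) : ℝ) : ℂ)
        = ((∫ t in Set.Ioi X, t ^ (-s-1) : ℝ) : ℂ) := integral_ofReal
    rw [setIntegral_congr_fun measurableSet_Ioi hcpow_ofReal, h2, integral_rpow_tail hs hX]
  have hI : ∫ t in Set.Ioi X, (t:ℂ)^(-(s:ℂ)-1) * (∑ k ∈ Finset.Icc 0 ⌊t⌋₊, χ (k:ZMod q))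
      = ((X^(-s)/s : ℝ):ℂ) * c₁
        - ∑ a ∈ Finset.Icc 1 q, χ (a:ZMod q) * (((q:ℝ)^(-s) * J a : ℝ):ℂ) := by
    have hIcongr : ∫ t in Set.Ioi X, (t:ℂ)^(-(s:ℂ)-1) * (∑ k ∈ Finset.Icc 0 ⌊t⌋₊, χ (k:ZMod q))
        = ∫ t in Set.Ioi X, ((t:ℂ)^(-(s:ℂ)-1) * c₁
            - ∑ a ∈ Finset.Icc 1 q,
                χ (a:ZMod q) * ((t:ℂ)^(-(s:ℂ)-1) * ((sawtooth ((t - a)/q) : ℝ):ℂ))) := by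
      refine setIntegral_congr_fun measurableSet_Ioi (fun t ht => ?_)
      rw [hSc t (le_of_lt (hX.trans ht)), mul_sub]
      congr 1
      simp only [hΨ, Finset.mul_sum]
      exact Finset.sum_congr rfl fun a _ => by ring
    rw [hIcongr, integral_sub hI1 (integrable_finset_sum _ (fun a _ => ((hIa a).const_mul _))),
      integral_finset_sum _ (fun a _ => ((hIa a).const_mul _))]
    congr 1
    · rw [integral_mul_const, hIcpow]
    · exact Finset.sum_congr rfl fun a _ => by rw [integral_const_mul, hofa a]
  have hGE : Gfun q χ X (s:ℂ) = E₁ := by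
    unfold Gfun
    rw [hSc X hX.le, hI, hE₁, hXc, hqc]
    have hpull : ∑ a ∈ Finset.Icc 1 q, χ (a:ZMod q) * (((q:ℝ)^(-s) * J a : ℝ):ℂ)
        = (((q:ℝ)^(-s) : ℝ):ℂ) * ∑ a ∈ Finset.Icc 1 q, χ (a:ZMod q) * ((J a : ℝ):ℂ) := by
      rw [Finset.mul_sum]
      refine Finset.sum_congr rfl fun a _ => ?_
      push_cast
      ring
    rw [hpull]
    have hdivcancel : (s:ℂ) * ((X^(-s)/s : ℝ):ℂ) = ((X^(-s) : ℝ):ℂ) := by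
      push_cast
      field_simp
    have hΨX : Ψ X = ∑ a ∈ Finset.Icc 1 q, χ (a:ZMod q) * ((sawtooth ((X - a)/q) : ℝ) : ℂ) := rfl
    rw [mul_sub ((s:ℂ)), ← mul_assoc ((s:ℂ)), hdivcancel]
    rw [hΨ]
    ring
  constructor
  · rw [hid, hpartial, hGE]
  · rw [hE₁]
    have hXpos : (0:ℝ) < X^(-s) := Real.rpow_pos_of_pos hX _
    have hqpos : (0:ℝ) < (q:ℝ)^(-s) := Real.rpow_pos_of_pos hq' _
    have hXnorm : ‖(X:ℂ)^(-(s:ℂ))‖ = X^(-s) := by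
      rw [hXc, Complex.norm_real, Real.norm_eq_abs, abs_of_pos hXpos]
    have hqnorm : ‖(q:ℂ)^(-(s:ℂ))‖ = (q:ℝ)^(-s) := by
      rw [hqc, Complex.norm_real, Real.norm_eq_abs, abs_of_pos hqpos]
    have hsnorm : ‖(s:ℂ)‖ = s := by
      rw [Complex.norm_real, Real.norm_eq_abs, abs_of_pos hs]
    have hb1 : ‖∑ a ∈ Finset.Icc 1 q, χ (a : ZMod q) * ((sawtooth ((X - a)/q) : ℝ) : ℂ)‖
        ≤ (q:ℝ) * (1/2) := by
      refine le_trans (norm_sum_le _ _) ?_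
      calc ∑ a ∈ Finset.Icc 1 q, ‖χ (a : ZMod q) * ((sawtooth ((X - a)/q) : ℝ) : ℂ)‖
          ≤ ∑ _a ∈ Finset.Icc 1 q, (1/2 : ℝ) := by
            refine Finset.sum_le_sum fun a _ => ?_
            rw [norm_mul, Complex.norm_real]
            calc ‖χ ((a:ℕ) : ZMod q)‖ * ‖sawtooth ((X - a)/q)‖
                ≤ 1 * (1/2) :=
                  mul_le_mul (hg1 _) (norm_saw_le _) (norm_nonneg _) zero_le_one
              _ = 1/2 := by ring
        _ = (q:ℝ) * (1/2) := by rw [Finset.sum_const, Nat.card_Icc]; simp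
    have hJb : ∀ a : ℕ, |J a| ≤ (1/2) * ((X/q)^(-s)/s) := by
      intro a
      have hdom : IntegrableOn (fun u : ℝ => (1/2) * u^(-s-1)) (Set.Ioi (X/q)) :=
        (integrableOn_Ioi_rpow_of_lt (by linarith) hXq).const_mul (1/2)
      have hle : ‖J a‖ ≤ ∫ u in Set.Ioi (X/q), (1/2) * u^(-s-1) := by
        rw [hJ]
        refine norm_integral_le_of_norm_le hdom ?_
        filter_upwards [MeasureTheory.ae_restrict_mem measurableSet_Ioi] with u hu
        have hu0 : (0:ℝ) < u := lt_trans hXq hu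
        have hupos : (0:ℝ) < u^(s+1) := Real.rpow_pos_of_pos hu0 _
        rw [Real.norm_eq_abs, abs_div, abs_of_pos hupos, div_eq_mul_inv,
          ← Real.rpow_neg hu0.le, show -(s+1) = -s-1 by ring]
        exact mul_le_mul_of_nonneg_right (norm_saw_le _) (Real.rpow_nonneg hu0.le _)
      rw [integral_const_mul, integral_rpow_tail hs hXq] at hle
      exact hle
    have hb2 : ‖∑ a ∈ Finset.Icc 1 q, χ (a : ZMod q) * ((J a : ℝ) : ℂ)‖
        ≤ (q:ℝ) * ((1/2) * ((X/q)^(-s)/s)) := by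
      refine le_trans (norm_sum_le _ _) ?_
      have hnn : (0:ℝ) ≤ (1/2) * ((X/q)^(-s)/s) := by positivity
      calc ∑ a ∈ Finset.Icc 1 q, ‖χ (a : ZMod q) * ((J a : ℝ) : ℂ)‖
          ≤ ∑ _a ∈ Finset.Icc 1 q, ((1/2) * ((X/q)^(-s)/s) : ℝ) := by
            refine Finset.sum_le_sum fun a _ => ?_
            rw [norm_mul, Complex.norm_real, Real.norm_eq_abs]
            calc ‖χ ((a:ℕ) : ZMod q)‖ * |J a|
                ≤ 1 * ((1/2) * ((X/q)^(-s)/s)) :=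
                  mul_le_mul (hg1 _) (hJb a) (abs_nonneg _) zero_le_one
              _ = (1/2) * ((X/q)^(-s)/s) := by ring
        _ = (q:ℝ) * ((1/2) * ((X/q)^(-s)/s)) := by rw [Finset.sum_const, Nat.card_Icc]; simp
    calc ‖(X:ℂ)^(-(s:ℂ)) * (∑ a ∈ Finset.Icc 1 q, χ (a : ZMod q) * ((sawtooth ((X - a)/q) : ℝ) : ℂ))
          - (s:ℂ) * (q:ℂ)^(-(s:ℂ)) * (∑ a ∈ Finset.Icc 1 q, χ (a : ZMod q) * ((J a : ℝ) : ℂ))‖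
        ≤ ‖(X:ℂ)^(-(s:ℂ))‖ * ‖∑ a ∈ Finset.Icc 1 q, χ (a : ZMod q) * ((sawtooth ((X - a)/q) : ℝ) : ℂ)‖
          + ‖(s:ℂ)‖ * ‖(q:ℂ)^(-(s:ℂ))‖ * ‖∑ a ∈ Finset.Icc 1 q, χ (a : ZMod q) * ((J a : ℝ) : ℂ)‖ := by
          refine le_trans (norm_sub_le _ _) ?_
          rw [norm_mul, norm_mul, norm_mul]
      _ ≤ X^(-s) * ((q:ℝ) * (1/2)) + s * ((q:ℝ)^(-s) * ((q:ℝ) * ((1/2) * ((X/q)^(-s)/s)))) := by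
          rw [hXnorm, hqnorm, hsnorm]
          have h1 := mul_le_mul_of_nonneg_left hb1 hXpos.le
          have h2 : s * (q:ℝ)^(-s) * ‖∑ a ∈ Finset.Icc 1 q, χ (a : ZMod q) * ((J a : ℝ) : ℂ)‖
              ≤ s * ((q:ℝ)^(-s) * ((q:ℝ) * ((1/2) * ((X/q)^(-s)/s)))) := by
            rw [mul_assoc]
            refine mul_le_mul_of_nonneg_left ?_ hs.le
            exact mul_le_mul_of_nonneg_left hb2 hqpos.le
          linarith
      _ = 1 * (q:ℝ) * X^(-s) := by
          rw [Real.div_rpow hX.le hq'.le]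
          field_simp
          ring
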